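/- If f, g : ℝ^n → ℝ are Schwartz functions and at least one of them is parity-even (h(−x) = h(x) for all x), then F_R[f · g] = (2π)^{-n/2} (F_R[f] ∗ F_R[g]) pointwise, where f · g is the pointwise product. -/

import Mathlib

open MeasureTheory Real Complex FourierTransform SchwartzMap
open scoped RealInnerProductSpace

noncomputable def realFourier {n : ℕ} (f : EuclideanSpace ℝ (Fin n) → ℝ)
    (y : EuclideanSpace ℝ (Fin n)) : ℝ :=
  (2 * π) ^ (-(n : ℝ) / 2) * ∫ x, f x * (Real.cos (inner ℝ y x) - Real.sin (inner ℝ y x))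

noncomputable def conv {n : ℕ} (f g : EuclideanSpace ℝ (Fin n) → ℝ)
    (x : EuclideanSpace ℝ (Fin n)) : ℝ :=
  ∫ t, f (x - t) * g t

variable {n : ℕ}

-- odd integral lemma
lemma odd_sin_integral {h : EuclideanSpace ℝ (Fin n) → ℝ} (hh : ∀ x, h (-x) = h x)
    (z : EuclideanSpace ℝ (Fin n)) : ∫ t, h t * Real.sin ⟪t, z⟫ = 0 := by
  have h1 := MeasureTheory.integral_neg_eq_self (fun t => h t * Real.sin ⟪t, z⟫)
    (volume : Measure (EuclideanSpace ℝ (Fin n)))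
  have h2 : ∀ t : EuclideanSpace ℝ (Fin n),
      h (-t) * Real.sin ⟪-t, z⟫ = -(h t * Real.sin ⟪t, z⟫) := by
    intro t
    rw [hh, inner_neg_left, Real.sin_neg]
    ring
  simp only [h2, integral_neg] at h1
  linarith

lemma integrable_mul_trig {φ : EuclideanSpace ℝ (Fin n) → ℝ} (hφ : Integrable φ)
    {k : EuclideanSpace ℝ (Fin n) → ℝ} (hk : Continuous k) {C : ℝ}
    (hb : ∀ x, ‖k x‖ ≤ C) : Integrable (fun x => φ x * k x) := by
  have := hφ.bdd_mul hk.aestronglyMeasurable (ae_of_all _ hb)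
  simpa [mul_comm] using this

lemma cont_cos (z : EuclideanSpace ℝ (Fin n)) : Continuous fun x : EuclideanSpace ℝ (Fin n) => Real.cos ⟪x, z⟫ :=
  Real.continuous_cos.comp (continuous_id.inner continuous_const)

lemma cont_sin (z : EuclideanSpace ℝ (Fin n)) : Continuous fun x : EuclideanSpace ℝ (Fin n) => Real.sin ⟪x, z⟫ :=
  Real.continuous_sin.comp (continuous_id.inner continuous_const)

/-- Fourier transform of (real) integrable function at `(2π)⁻¹ • z`, in terms of
cos and sin transforms. -/
lemma integral_coe_complex (μ : Measure (EuclideanSpace ℝ (Fin n))) (f : EuclideanSpace ℝ (Fin n) → ℝ) :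
    ∫ x, ((f x : ℝ) : ℂ) ∂μ = ((∫ x, f x ∂μ : ℝ) : ℂ) :=
  integral_ofReal

lemma ft_eq {φ : EuclideanSpace ℝ (Fin n) → ℝ} (hφ : Integrable φ)
    (z : EuclideanSpace ℝ (Fin n)) :
    𝓕 (fun x => (φ x : ℂ)) ((2 * π)⁻¹ • z)
      = ((∫ x, φ x * Real.cos ⟪x, z⟫ : ℝ) : ℂ)
        - Complex.I * ((∫ x, φ x * Real.sin ⟪x, z⟫ : ℝ) : ℂ) := by
  rw [Real.fourier_eq']
  have key : ∀ x : EuclideanSpace ℝ (Fin n),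
      Complex.exp ((↑(-2 * π * ⟪x, (2 * π)⁻¹ • z⟫) * Complex.I)) • ((φ x : ℝ) : ℂ)
        = ((φ x * Real.cos ⟪x, z⟫ : ℝ) : ℂ)
          - Complex.I * ((φ x * Real.sin ⟪x, z⟫ : ℝ) : ℂ) := by
    intro x
    have hip : ⟪x, (2 * π)⁻¹ • z⟫ = (2 * π)⁻¹ * ⟪x, z⟫ := real_inner_smul_right _ _ _
    have h2π : (2 * π) ≠ 0 := by positivity
    have : (-2 * π * ⟪x, (2 * π)⁻¹ • z⟫ : ℝ) = -⟪x, z⟫ := by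
      rw [hip]; field_simp
    rw [this, smul_eq_mul, Complex.exp_mul_I]
    rw [show ((-⟪x, z⟫ : ℝ) : ℂ) = -(⟪x, z⟫ : ℂ) by push_cast; ring, Complex.cos_neg,
      Complex.sin_neg, ← Complex.ofReal_cos, ← Complex.ofReal_sin]
    push_cast
    ring
  simp only [key]
  rw [integral_sub ?hc ?hs]
  · rw [integral_coe_complex, integral_const_mul, integral_coe_complex]
  case hc => exact (integrable_mul_trig hφ (cont_cos z) (fun x => by
      simpa using Real.abs_cos_le_one _)).ofReal
  case hs => exact ((integrable_mul_trig hφ (cont_sin z) (fun x => by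
      simpa using Real.abs_sin_le_one _)).ofReal.const_mul Complex.I)

/-- complexification of a real Schwartz map -/
noncomputable def toComplexS (f : SchwartzMap (EuclideanSpace ℝ (Fin n)) ℝ) :
    SchwartzMap (EuclideanSpace ℝ (Fin n)) ℂ :=
  SchwartzMap.bilinLeftCLM (ContinuousLinearMap.lsmul ℝ ℝ : ℝ →L[ℝ] ℂ →L[ℝ] ℂ)
    (Function.HasTemperateGrowth.const (1 : ℂ)) f

lemma toComplexS_apply (f : SchwartzMap (EuclideanSpace ℝ (Fin n)) ℝ)
    (x : EuclideanSpace ℝ (Fin n)) : toComplexS f x = (f x : ℂ) := by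
  simp [toComplexS, SchwartzMap.bilinLeftCLM]
  rfl

lemma coe_integrable (f : SchwartzMap (EuclideanSpace ℝ (Fin n)) ℝ) :
    Integrable (fun x => (f x : ℂ)) := (f.integrable (μ := volume)).ofReal

lemma ftS_eq (f : SchwartzMap (EuclideanSpace ℝ (Fin n)) ℝ) :
    𝓕 (fun x => (f x : ℂ)) = ⇑(SchwartzMap.fourierTransformCLM ℝ (toComplexS f)) := by
  rw [SchwartzMap.fourierTransformCLM_apply]
  have : (fun x => (f x : ℂ)) = ⇑(toComplexS f) := funext fun x => (toComplexS_apply f x).symm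
  rw [this]
  exact (SchwartzMap.fourier_coe _).symm

lemma ft_integrable (f : SchwartzMap (EuclideanSpace ℝ (Fin n)) ℝ) :
    Integrable (𝓕 (fun x => (f x : ℂ))) := by
  rw [ftS_eq]; exact (SchwartzMap.fourierTransformCLM ℝ (toComplexS f)).integrable

lemma ft_continuous (f : SchwartzMap (EuclideanSpace ℝ (Fin n)) ℝ) :
    Continuous (𝓕 (fun x => (f x : ℂ))) := by
  rw [ftS_eq]; exact (SchwartzMap.fourierTransformCLM ℝ (toComplexS f)).continuous

/-- double Fourier transform is reflection -/
lemma ft_ft (f : SchwartzMap (EuclideanSpace ℝ (Fin n)) ℝ) (z : EuclideanSpace ℝ (Fin n)) :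
    𝓕 (𝓕 (fun x => (f x : ℂ))) z = ((f (-z) : ℝ) : ℂ) := by
  have h1 : 𝓕⁻ (𝓕 (fun x => (f x : ℂ))) = (fun x => (f x : ℂ)) :=
    Continuous.fourierInv_fourier_eq (by continuity) (coe_integrable f) (ft_integrable f)
  have h2 := Real.fourierInv_eq_fourier_neg (𝓕 (fun x => (f x : ℂ))) (-z)
  rw [h1] at h2
  simp only [neg_neg] at h2
  exact h2.symm

lemma Cpos : (0:ℝ) < (2 * π) ^ (-(n : ℝ) / 2) := Real.rpow_pos_of_pos Real.two_pi_pos _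

lemma realFourier_eq_cos (g : SchwartzMap (EuclideanSpace ℝ (Fin n)) ℝ)
    (hg : ∀ x, g (-x) = g x) (t : EuclideanSpace ℝ (Fin n)) :
    realFourier (⇑g) t = (2 * π) ^ (-(n : ℝ) / 2) * ∫ x, g x * Real.cos ⟪x, t⟫ := by
  unfold realFourier
  congr 1
  have hpt : ∀ x : EuclideanSpace ℝ (Fin n),
      g x * (Real.cos (inner ℝ t x) - Real.sin (inner ℝ t x))
        = g x * Real.cos ⟪x, t⟫ - g x * Real.sin ⟪x, t⟫ := by
    intro x
    rw [real_inner_comm t x]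
    ring
  simp only [hpt]
  rw [integral_sub
      (integrable_mul_trig (g.integrable) (cont_cos t) (fun x => by simpa using Real.abs_cos_le_one _))
      (integrable_mul_trig (g.integrable) (cont_sin t) (fun x => by simpa using Real.abs_sin_le_one _)),
    odd_sin_integral hg t, sub_zero]

lemma realFourier_even (g : SchwartzMap (EuclideanSpace ℝ (Fin n)) ℝ)
    (hg : ∀ x, g (-x) = g x) (t : EuclideanSpace ℝ (Fin n)) :
    realFourier (⇑g) (-t) = realFourier (⇑g) t := by
  rw [realFourier_eq_cos g hg, realFourier_eq_cos g hg]
  congr 1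
  simp [inner_neg_right]

lemma realFourier_coe (g : SchwartzMap (EuclideanSpace ℝ (Fin n)) ℝ)
    (hg : ∀ x, g (-x) = g x) (t : EuclideanSpace ℝ (Fin n)) :
    ((realFourier (⇑g) t : ℝ) : ℂ)
      = ((2 * π) ^ (-(n : ℝ) / 2) : ℝ) * 𝓕 (fun x => (g x : ℂ)) ((2 * π)⁻¹ • t) := by
  rw [ft_eq (g.integrable) t, odd_sin_integral hg t, realFourier_eq_cos g hg]
  push_cast
  ring

lemma realFourier_fun_eq (g : SchwartzMap (EuclideanSpace ℝ (Fin n)) ℝ)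
    (hg : ∀ x, g (-x) = g x) :
    realFourier (⇑g) = fun t =>
      ((((2 * π) ^ (-(n : ℝ) / 2) : ℝ) : ℂ) * 𝓕 (fun x => (g x : ℂ)) ((2 * π)⁻¹ • t)).re := by
  funext t
  rw [← realFourier_coe g hg t, Complex.ofReal_re]

lemma realFourier_continuous (g : SchwartzMap (EuclideanSpace ℝ (Fin n)) ℝ)
    (hg : ∀ x, g (-x) = g x) : Continuous (realFourier (⇑g)) := by
  rw [realFourier_fun_eq g hg]
  exact Complex.continuous_re.comp
    (continuous_const.mul ((ft_continuous g).comp (continuous_const_smul _)))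

lemma realFourier_integrable (g : SchwartzMap (EuclideanSpace ℝ (Fin n)) ℝ)
    (hg : ∀ x, g (-x) = g x) : Integrable (realFourier (⇑g)) := by
  rw [realFourier_fun_eq g hg]
  have h1 : Integrable (fun t => 𝓕 (fun x => (g x : ℂ)) ((2 * π)⁻¹ • t)) :=
    (ft_integrable g).comp_smul (by positivity : ((2:ℝ) * π)⁻¹ ≠ 0)
  have h2 := (h1.const_mul ((((2 * π) ^ (-(n : ℝ) / 2) : ℝ) : ℂ))).re
  exact h2

lemma const_sq : ((2 * π) ^ (-(n : ℝ) / 2) : ℝ) * ((2 * π) ^ (-(n : ℝ) / 2) : ℝ)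
    * ((2 * π) ^ (n : ℕ) : ℝ) = 1 := by
  rw [← Real.rpow_natCast (2 * π) n, ← Real.rpow_add Real.two_pi_pos,
    ← Real.rpow_add Real.two_pi_pos]
  rw [show (-(n : ℝ) / 2 + -(n : ℝ) / 2 + (n : ℝ)) = 0 by ring, Real.rpow_zero]

lemma inversion (g : SchwartzMap (EuclideanSpace ℝ (Fin n)) ℝ)
    (hg : ∀ x, g (-x) = g x) (z : EuclideanSpace ℝ (Fin n)) :
    (2 * π) ^ (-(n : ℝ) / 2) * ∫ t, realFourier (⇑g) t * Real.cos ⟪t, z⟫ = g z := by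
  set C : ℝ := (2 * π) ^ (-(n : ℝ) / 2) with hC
  have hRint := realFourier_integrable g hg
  have hReven := realFourier_even g hg
  -- step A
  have hA : ((∫ t, realFourier (⇑g) t * Real.cos ⟪t, z⟫ : ℝ) : ℂ)
      = 𝓕 (fun t => ((realFourier (⇑g) t : ℝ) : ℂ)) ((2 * π)⁻¹ • z) := by
    rw [ft_eq hRint z, odd_sin_integral hReven z]
    simp
  -- step B
  have hB : 𝓕 (fun t => ((realFourier (⇑g) t : ℝ) : ℂ)) ((2 * π)⁻¹ • z)
      = ((C : ℂ)) * (((2 * π) ^ (n : ℕ) : ℝ) : ℂ) * 𝓕 (𝓕 (fun x => (g x : ℂ))) z := by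
    rw [Real.fourier_eq']
    have hpt : ∀ t : EuclideanSpace ℝ (Fin n),
        Complex.exp ((↑(-2 * π * ⟪t, (2 * π)⁻¹ • z⟫) * Complex.I))
            • ((realFourier (⇑g) t : ℝ) : ℂ)
          = (fun u => Complex.exp ((↑(-2 * π * ⟪u, z⟫) * Complex.I))
              • ((C : ℂ) * 𝓕 (fun x => (g x : ℂ)) u)) ((2 * π)⁻¹ • t) := by
      intro t
      simp only
      rw [realFourier_coe g hg t]
      rw [← hC, real_inner_smul_right, real_inner_smul_left]
    simp only [hpt]
    rw [MeasureTheory.Measure.integral_comp_inv_smul volume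
      (fun u => Complex.exp ((↑(-2 * π * ⟪u, z⟫) * Complex.I))
        • ((C : ℂ) * 𝓕 (fun x => (g x : ℂ)) u)) (2 * π)]
    rw [finrank_euclideanSpace_fin, abs_of_pos (by positivity)]
    have : ∀ u : EuclideanSpace ℝ (Fin n),
        Complex.exp ((↑(-2 * π * ⟪u, z⟫) * Complex.I)) • ((C : ℂ) * 𝓕 (fun x => (g x : ℂ)) u)
          = (C : ℂ) * (Complex.exp ((↑(-2 * π * ⟪u, z⟫) * Complex.I))
              • 𝓕 (fun x => (g x : ℂ)) u) := by
      intro u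
      simp only [smul_eq_mul]
      ring
    simp only [this]
    rw [integral_const_mul, Real.fourier_eq']
    rw [Complex.real_smul]
    push_cast
    ring
  -- step C and conclusion
  have hC2 : 𝓕 (𝓕 (fun x => (g x : ℂ))) z = ((g z : ℝ) : ℂ) := by
    rw [ft_ft g z, hg]
  have := hA.trans (hB.trans (by rw [hC2]))
  have hre : C * ∫ t, realFourier (⇑g) t * Real.cos ⟪t, z⟫
      = C * (C * ((2 * π) ^ (n : ℕ)) * g z) := by
    have h2 : ((C * (C * ((2 * π) ^ (n : ℕ)) * g z) : ℝ) : ℂ)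
        = ((C * ∫ t, realFourier (⇑g) t * Real.cos ⟪t, z⟫ : ℝ) : ℂ) := by
      push_cast
      rw [this]
      push_cast
      ring
    exact_mod_cast h2.symm
  rw [hre, ← mul_assoc, ← mul_assoc, const_sq, one_mul]

lemma key (f g : SchwartzMap (EuclideanSpace ℝ (Fin n)) ℝ)
    (hg : ∀ x, g (-x) = g x) (y : EuclideanSpace ℝ (Fin n)) :
    realFourier (fun x => f x * g x) y =
      (2 * π) ^ (-(n : ℝ) / 2) * conv (realFourier (⇑f)) (realFourier (⇑g)) y := by
  set C : ℝ := (2 * π) ^ (-(n : ℝ) / 2) with hCdef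
  have hCpos : 0 < C := Real.rpow_pos_of_pos Real.two_pi_pos _
  set Rg : EuclideanSpace ℝ (Fin n) → ℝ := realFourier (⇑g) with hRg
  have hRint : Integrable Rg := realFourier_integrable g hg
  have hRcont : Continuous Rg := realFourier_continuous g hg
  have hReven : ∀ t, Rg (-t) = Rg t := realFourier_even g hg
  -- the inner t-integral
  have hinner : ∀ z : EuclideanSpace ℝ (Fin n),
      (∫ t, f z * (Real.cos ⟪y - t, z⟫ - Real.sin ⟪y - t, z⟫) * Rg t)
        = C⁻¹ * (f z * g z * (Real.cos ⟪y, z⟫ - Real.sin ⟪y, z⟫)) := by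
    intro z
    have hpt : ∀ t : EuclideanSpace ℝ (Fin n),
        f z * (Real.cos ⟪y - t, z⟫ - Real.sin ⟪y - t, z⟫) * Rg t
          = f z * ((Real.cos ⟪y, z⟫ - Real.sin ⟪y, z⟫) * (Rg t * Real.cos ⟪t, z⟫)
              + (Real.cos ⟪y, z⟫ + Real.sin ⟪y, z⟫) * (Rg t * Real.sin ⟪t, z⟫)) := by
      intro t
      rw [inner_sub_left, Real.cos_sub, Real.sin_sub]
      ring
    simp only [hpt]
    rw [integral_const_mul, integral_add
        ((integrable_mul_trig hRint (cont_cos z) (fun x => by simpa using Real.abs_cos_le_one _)).const_mul _)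
        ((integrable_mul_trig hRint (cont_sin z) (fun x => by simpa using Real.abs_sin_le_one _)).const_mul _),
      integral_const_mul, integral_const_mul, odd_sin_integral hReven z,
      mul_zero, add_zero]
    have hcosint : ∫ t, Rg t * Real.cos ⟪t, z⟫ = C⁻¹ * g z := by
      have h := inversion g hg z
      rw [← hCdef, ← hRg] at h
      rw [← h, ← mul_assoc, inv_mul_cancel₀ hCpos.ne', one_mul]
    rw [hcosint]
    field_simp
  -- Fubini
  have hfub : Integrable (fun p : (EuclideanSpace ℝ (Fin n)) × (EuclideanSpace ℝ (Fin n)) =>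
      f p.2 * (Real.cos ⟪y - p.1, p.2⟫ - Real.sin ⟪y - p.1, p.2⟫) * Rg p.1)
      (volume.prod volume) := by
    have hb : Integrable (fun p : (EuclideanSpace ℝ (Fin n)) × (EuclideanSpace ℝ (Fin n)) =>
        (2 * |Rg p.1|) * |f p.2|) (volume.prod volume) :=
      (hRint.abs.const_mul 2).mul_prod (f.integrable.abs)
    refine hb.mono' ?_ ?_
    · apply Continuous.aestronglyMeasurable
      have hic : Continuous (fun p : (EuclideanSpace ℝ (Fin n)) × (EuclideanSpace ℝ (Fin n)) =>
          (⟪y - p.1, p.2⟫ : ℝ)) := (continuous_const.sub continuous_fst).inner continuous_snd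
      exact ((f.continuous.comp continuous_snd).mul
        ((Real.continuous_cos.comp hic).sub (Real.continuous_sin.comp hic))).mul
        (hRcont.comp continuous_fst)
    · refine Filter.Eventually.of_forall (fun p => ?_)
      have h1 : |Real.cos ⟪y - p.1, p.2⟫ - Real.sin ⟪y - p.1, p.2⟫| ≤ 2 := by
        have := Real.abs_cos_le_one (⟪y - p.1, p.2⟫ : ℝ)
        have := Real.abs_sin_le_one (⟪y - p.1, p.2⟫ : ℝ)
        have := abs_sub (Real.cos (⟪y - p.1, p.2⟫ : ℝ)) (Real.sin (⟪y - p.1, p.2⟫ : ℝ))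
        linarith
      have h2 : (0:ℝ) ≤ |f p.2| := abs_nonneg _
      have h3 : (0:ℝ) ≤ |Rg p.1| := abs_nonneg _
      simp only [Real.norm_eq_abs, abs_mul]
      calc |f p.2| * |Real.cos ⟪y - p.1, p.2⟫ - Real.sin ⟪y - p.1, p.2⟫| * |Rg p.1|
          ≤ |f p.2| * 2 * |Rg p.1| :=
            mul_le_mul_of_nonneg_right (mul_le_mul_of_nonneg_left h1 h2) h3
        _ = 2 * |Rg p.1| * |f p.2| := by ring
  -- main computation
  have hconv : conv (realFourier (⇑f)) Rg y
      = ∫ z, f z * g z * (Real.cos ⟪y, z⟫ - Real.sin ⟪y, z⟫) := by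
    unfold conv
    have h1 : ∀ t : EuclideanSpace ℝ (Fin n),
        realFourier (⇑f) (y - t) * Rg t
          = C * ∫ z, f z * (Real.cos ⟪y - t, z⟫ - Real.sin ⟪y - t, z⟫) * Rg t := by
      intro t
      show (C * ∫ z, f z * (Real.cos (inner ℝ (y - t) z) - Real.sin (inner ℝ (y - t) z))) * Rg t = _
      rw [mul_assoc, ← integral_mul_const]
    simp only [h1]
    rw [integral_const_mul]
    rw [integral_integral_swap hfub]
    simp only [hinner]
    rw [integral_const_mul, ← mul_assoc, mul_inv_cancel₀ hCpos.ne', one_mul]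
  rw [hconv]
  rfl

lemma conv_comm (φ ψ : EuclideanSpace ℝ (Fin n) → ℝ) (y : EuclideanSpace ℝ (Fin n)) :
    conv φ ψ y = conv ψ φ y := by
  unfold conv
  have h := MeasureTheory.integral_sub_left_eq_self
    (fun t => φ t * ψ (y - t)) (volume : Measure (EuclideanSpace ℝ (Fin n))) y
  simp only [sub_sub_cancel] at h
  rw [h]
  simp_rw [mul_comm]

theorem realFourier_prod_even (n : ℕ) (f g : SchwartzMap (EuclideanSpace ℝ (Fin n)) ℝ)
    (h : (∀ x, f (-x) = f x) ∨ (∀ x, g (-x) = g x)) :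
    ∀ y, realFourier (fun x => f x * g x) y =
      (2 * π) ^ (-(n : ℝ) / 2) * conv (realFourier (⇑f)) (realFourier (⇑g)) y := by
  intro y
  rcases h with hf | hg
  · have hswap : (fun x => f x * g x) = fun x => g x * f x :=
      funext fun x => mul_comm _ _
    rw [hswap, key g f hf y, conv_comm]
  · exact key f g hg y
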